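/- Let (A₁ →d A₀, μ₂, μ₃, α₀, α₁) be a skeletal 2-term HA∞-algebra (that is, d = 0). Then the actions a·m := μ₂(a,m) and m·a := μ₂(m,a), together with β := α₁, make A₁ a hom-bimodule over the hom-associative algebra (A₀, μ₂, α₀); in particular α₀(a)·(b·m) = μ₂(a,b)·α₁(m), α₁(m)·μ₂(a,b) = (m·a)·α₀(b), and α₀(a)·(m·b) = (a·m)·α₀(b) for all a, b ∈ A₀ and m ∈ A₁. -/

import Mathlib

/-! Axioms (i1)–(i3) say that `μ₃`, evaluated with one argument in the image of `d`, measures the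
failure of the three associativity laws of a bimodule; for `d = 0` these defects vanish. -/

/-- A 2-term HA∞-algebra `(A₁ →d A₀, μ₂, μ₃, α₀, α₁)` over a field `k`.
`m00`, `m01`, `m10` are the three components of the bilinear map `μ₂`,
`m3` is the trilinear map `μ₃`, and `a0`, `a1` are the linear maps `α₀`, `α₁`. -/
structure TwoTermHA (k : Type*) [Field k] (A0 A1 : Type*)
    [AddCommGroup A0] [Module k A0] [AddCommGroup A1] [Module k A1] where
  d : A1 →ₗ[k] A0
  m00 : A0 →ₗ[k] A0 →ₗ[k] A0
  m01 : A0 →ₗ[k] A1 →ₗ[k] A1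
  m10 : A1 →ₗ[k] A0 →ₗ[k] A1
  m3 : A0 →ₗ[k] A0 →ₗ[k] A0 →ₗ[k] A1
  a0 : A0 →ₗ[k] A0
  a1 : A1 →ₗ[k] A1
  comm_d : ∀ m, a0 (d m) = d (a1 m)
  comm_m3 : ∀ a b c, a1 (m3 a b c) = m3 (a0 a) (a0 b) (a0 c)
  axb : ∀ a b, a0 (m00 a b) = m00 (a0 a) (a0 b)
  axc : ∀ a m, a1 (m01 a m) = m01 (a0 a) (a1 m)
  axd : ∀ m a, a1 (m10 m a) = m10 (a1 m) (a0 a)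
  axe : ∀ a m, d (m01 a m) = m00 a (d m)
  axf : ∀ m a, d (m10 m a) = m00 (d m) a
  axg : ∀ m n, m01 (d m) n = m10 m (d n)
  axh : ∀ a b c, d (m3 a b c) = m00 (m00 a b) (a0 c) - m00 (a0 a) (m00 b c)
  axi1 : ∀ a b m, m3 a b (d m) = m01 (m00 a b) (a1 m) - m01 (a0 a) (m01 b m)
  axi2 : ∀ a m c, m3 a (d m) c = m10 (m01 a m) (a0 c) - m01 (a0 a) (m10 m c)
  axi3 : ∀ m b c, m3 (d m) b c = m10 (m10 m b) (a0 c) - m10 (a1 m) (m00 b c)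
  axj : ∀ a b c e,
    m3 (m00 a b) (a0 c) (a0 e) - m3 (a0 a) (m00 b c) (a0 e)
        + m3 (a0 a) (a0 b) (m00 c e)
      = m10 (m3 a b c) (a0 (a0 e)) + m01 (a0 (a0 a)) (m3 b c e)

namespace TwoTermHA

variable {k A0 A1 : Type*} [Field k]
  [AddCommGroup A0] [Module k A0] [AddCommGroup A1] [Module k A1] (T : TwoTermHA k A0 A1)

theorem m01_a0_m01 (a b : A0) (m : A1) :
    T.m01 (T.a0 a) (T.m01 b m) = T.m01 (T.m00 a b) (T.a1 m) - T.m3 a b (T.d m) := by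
  rw [T.axi1, sub_sub_cancel]

theorem m10_a1_m00 (m : A1) (a b : A0) :
    T.m10 (T.a1 m) (T.m00 a b) = T.m10 (T.m10 m a) (T.a0 b) - T.m3 (T.d m) a b := by
  rw [T.axi3, sub_sub_cancel]

theorem m01_a0_m10 (a : A0) (m : A1) (b : A0) :
    T.m01 (T.a0 a) (T.m10 m b) = T.m10 (T.m01 a m) (T.a0 b) - T.m3 a (T.d m) b := by
  rw [T.axi2, sub_sub_cancel]

end TwoTermHA

theorem skeletal_hom_bimodule
    {k A0 A1 : Type*} [Field k]
    [AddCommGroup A0] [Module k A0] [AddCommGroup A1] [Module k A1]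
    (T : TwoTermHA k A0 A1) (hskel : T.d = 0) :
    (∀ a m, T.a1 (T.m01 a m) = T.m01 (T.a0 a) (T.a1 m))
      ∧ (∀ m a, T.a1 (T.m10 m a) = T.m10 (T.a1 m) (T.a0 a))
      ∧ (∀ a b m, T.m01 (T.a0 a) (T.m01 b m) = T.m01 (T.m00 a b) (T.a1 m))
      ∧ (∀ a b m, T.m10 (T.a1 m) (T.m00 a b) = T.m10 (T.m10 m a) (T.a0 b))
      ∧ (∀ a b m, T.m01 (T.a0 a) (T.m10 m b) = T.m10 (T.m01 a m) (T.a0 b)) := by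
  refine ⟨T.axc, T.axd, fun a b m => ?_, fun a b m => ?_, fun a b m => ?_⟩ <;>
    simp only [T.m01_a0_m01, T.m10_a1_m00, T.m01_a0_m10, hskel, LinearMap.zero_apply, map_zero,
      sub_zero]
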